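/- iDEM estimator equals importance-sampled TSI: Let p be a smooth positive density with suitable decay, q_t(x̃) = ∫ N(x̃; x_0, γ^{−2}I) p(x_0) dx_0 with γ = a/b, and proposal π(x_0|x̃) = N(x_0; x̃, γ^{−2}I). Then ∇_{x̃} log E_{π(x_0|x̃)}[p(x_0)] = E_{π(x_0|x̃)}[(q(x_0|x̃)/π(x_0|x̃)) · ∇_{x_0} log p(x_0)], where q(x_0|x̃) ∝ N(x̃; x_0, γ^{−2}I)p(x_0). -/

import Mathlib

/-! Write `g(y, x₀) = N(x₀; y, γ⁻² I)`. Differentiating under the integral sign,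
`∇ log q(x̃) = q(x̃)⁻¹ ∫ p(x₀) ∇_y g(x̃, x₀) dx₀`. Since `g` depends only on `y - x₀`, the
`y`-gradient is minus the `x₀`-gradient, and integrating by parts against `p` (no boundary
term) turns this into `q(x̃)⁻¹ ∫ g(x̃, x₀) ∇p(x₀) dx₀`. Writing `∇p = p ∇ log p`, this is the
expectation under `π(· | x̃) = g(x̃, ·)` of the importance weight `q/π` times `∇ log p`. -/

open MeasureTheory

/-- Isotropic Gaussian density `N(x; y, γ⁻² I)` on `ℝ^d` (symmetric in `x, y`). -/
noncomputable def gaussIso {d : ℕ} (γ : ℝ)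
    (x y : EuclideanSpace ℝ (Fin d)) : ℝ :=
  (γ ^ 2 / (2 * Real.pi)) ^ ((d : ℝ) / 2) *
    Real.exp (-γ ^ 2 * ‖x - y‖ ^ 2 / 2)

section Gradient

variable {E : Type*} [NormedAddCommGroup E] [InnerProductSpace ℝ E] [CompleteSpace E]
  {f g : E → ℝ} {f' g' x : E}

theorem HasGradientAt.mul (hf : HasGradientAt f f' x) (hg : HasGradientAt g g' x) :
    HasGradientAt (fun y => f y * g y) (f x • g' + g x • f') x := by
  rw [hasGradientAt_iff_hasFDerivAt, map_add, map_smul, map_smul]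
  exact hf.hasFDerivAt.mul hg.hasFDerivAt

theorem HasGradientAt.log (hf : HasGradientAt f f' x) (hx : f x ≠ 0) :
    HasGradientAt (fun y => Real.log (f y)) ((f x)⁻¹ • f') x := by
  rw [hasGradientAt_iff_hasFDerivAt, map_smul]
  exact hf.hasFDerivAt.log hx

theorem integral_smul_gradient_eq_neg_of_integral_gradient_mul_eq_zero [MeasurableSpace E]
    {μ : Measure E} (hf : Differentiable ℝ f) (hg : Differentiable ℝ g)
    (hfg : Integrable (fun y => f y • gradient g y) μ)
    (hgf : Integrable (fun y => g y • gradient f y) μ)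
    (h : ∫ y, gradient (fun z => f z * g z) y ∂μ = 0) :
    ∫ y, f y • gradient g y ∂μ = -∫ y, g y • gradient f y ∂μ := by
  have hprod : ∀ y, gradient (fun z => f z * g z) y = f y • gradient g y + g y • gradient f y :=
    fun y => ((hf y).hasGradientAt.mul (hg y).hasGradientAt).gradient
  simp_rw [hprod] at h
  rw [integral_add hfg hgf] at h
  exact eq_neg_of_add_eq_zero_left h

end Gradient

theorem mul_exp_neg_sq_div_two_le_one (s : ℝ) : s * Real.exp (-s ^ 2 / 2) ≤ 1 := by
  have hs : s ≤ Real.exp (s ^ 2 / 2) := by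
    nlinarith [Real.add_one_le_exp (s ^ 2 / 2), sq_nonneg (s - 1)]
  rw [neg_div, Real.exp_neg, ← div_eq_mul_inv]
  exact (div_le_one (Real.exp_pos _)).mpr hs

section GaussIso

variable {d : ℕ} {γ : ℝ}

theorem gaussIso_comm (γ : ℝ) (x y : EuclideanSpace ℝ (Fin d)) :
    gaussIso γ x y = gaussIso γ y x := by
  rw [gaussIso, gaussIso, norm_sub_rev]

theorem gaussIso_pos (hγ : γ ≠ 0) (x y : EuclideanSpace ℝ (Fin d)) : 0 < gaussIso γ x y := by
  unfold gaussIso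
  positivity

theorem gaussIso_nonneg (γ : ℝ) (x y : EuclideanSpace ℝ (Fin d)) : 0 ≤ gaussIso γ x y := by
  unfold gaussIso
  positivity

theorem continuous_gaussIso (γ : ℝ) (x : EuclideanSpace ℝ (Fin d)) :
    Continuous (gaussIso γ x) := by
  unfold gaussIso
  fun_prop

theorem gaussIso_self (γ : ℝ) (x : EuclideanSpace ℝ (Fin d)) :
    gaussIso γ x x = (γ ^ 2 / (2 * Real.pi)) ^ ((d : ℝ) / 2) := by
  simp [gaussIso]

theorem gaussIso_le_gaussIso_self (γ : ℝ) (x y : EuclideanSpace ℝ (Fin d)) :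
    gaussIso γ x y ≤ gaussIso γ x x := by
  rw [gaussIso_self, gaussIso]
  refine mul_le_of_le_one_right (by positivity) (Real.exp_le_one_iff.mpr ?_)
  have : 0 ≤ γ ^ 2 * ‖x - y‖ ^ 2 := by positivity
  linarith

theorem hasGradientAt_gaussIso (γ : ℝ) (a x : EuclideanSpace ℝ (Fin d)) :
    HasGradientAt (fun y => gaussIso γ y a) ((-γ ^ 2 * gaussIso γ x a) • (x - a)) x := by
  have hsq : HasFDerivAt (fun y : EuclideanSpace ℝ (Fin d) => ‖y - a‖ ^ 2)
      (2 • innerSL ℝ (x - a)) x := by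
    simpa using ((hasFDerivAt_id x).sub_const a).norm_sq
  have hexp := (hsq.const_mul (-γ ^ 2 / 2)).exp.const_mul ((γ ^ 2 / (2 * Real.pi)) ^ ((d : ℝ) / 2))
  rw [hasGradientAt_iff_hasFDerivAt]
  refine (hexp.congr_fderiv ?_).congr_of_eventuallyEq (.of_forall fun y => ?_)
  · ext v
    simp only [gaussIso, map_sub, map_neg, map_smul, smul_apply, sub_apply, neg_apply,
      coe_innerSL_apply, InnerProductSpace.toDual_apply_apply, nsmul_eq_mul, Nat.cast_ofNat,
      smul_eq_mul, neg_mul, neg_smul]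
    ring_nf
  · simp only [gaussIso]
    ring_nf

theorem gradient_gaussIso (γ : ℝ) (a x : EuclideanSpace ℝ (Fin d)) :
    gradient (fun y => gaussIso γ y a) x = (-γ ^ 2 * gaussIso γ x a) • (x - a) :=
  (hasGradientAt_gaussIso γ a x).gradient

theorem hasGradientAt_gaussIso_right (γ : ℝ) (a x : EuclideanSpace ℝ (Fin d)) :
    HasGradientAt (fun y => gaussIso γ a y) ((-γ ^ 2 * gaussIso γ a x) • (x - a)) x := by
  simpa only [gaussIso_comm γ a] using hasGradientAt_gaussIso γ a x

/-- The Gaussian depends only on `x - a`, so its two gradients are opposite. -/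
theorem gradient_gaussIso_right (γ : ℝ) (a x : EuclideanSpace ℝ (Fin d)) :
    gradient (fun y => gaussIso γ a y) x = -gradient (fun y => gaussIso γ y x) a := by
  rw [(hasGradientAt_gaussIso_right γ a x).gradient, gradient_gaussIso,
    ← smul_neg, neg_sub]

theorem norm_gradient_gaussIso_le (γ : ℝ) (a x : EuclideanSpace ℝ (Fin d)) :
    ‖gradient (fun y => gaussIso γ y a) x‖ ≤ |γ| * gaussIso γ a a := by
  have hC : 0 ≤ gaussIso γ a a := by rw [gaussIso_self]; positivity
  have hexp : gaussIso γ x a = gaussIso γ a a * Real.exp (-(|γ| * ‖x - a‖) ^ 2 / 2) := by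
    rw [gaussIso_self, gaussIso, mul_pow, sq_abs, neg_mul]
  rw [gradient_gaussIso, norm_smul, Real.norm_eq_abs, abs_mul, abs_neg, abs_of_nonneg (sq_nonneg γ),
    hexp, abs_of_nonneg (by positivity)]
  calc γ ^ 2 * (gaussIso γ a a * Real.exp (-(|γ| * ‖x - a‖) ^ 2 / 2)) * ‖x - a‖
      = |γ| * gaussIso γ a a * ((|γ| * ‖x - a‖) * Real.exp (-(|γ| * ‖x - a‖) ^ 2 / 2)) := by
        rw [← sq_abs γ]; ring
    _ ≤ |γ| * gaussIso γ a a * 1 := by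
        gcongr
        exact mul_exp_neg_sq_div_two_le_one _
    _ = |γ| * gaussIso γ a a := mul_one _

end GaussIso

section ScoreIdentity

variable {d : ℕ} {γ : ℝ} {p : EuclideanSpace ℝ (Fin d) → ℝ}

theorem MeasureTheory.Integrable.gaussIso_smul {F : Type*} [NormedAddCommGroup F] [NormedSpace ℝ F]
    {φ : EuclideanSpace ℝ (Fin d) → F} (hφ : Integrable φ) (γ : ℝ) (x : EuclideanSpace ℝ (Fin d)) :
    Integrable (fun y => gaussIso γ x y • φ y) :=
  hφ.bdd_smul (gaussIso γ x x) (continuous_gaussIso γ x).aestronglyMeasurable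
    (.of_forall fun y => by
      rw [Real.norm_of_nonneg (gaussIso_nonneg γ x y)]
      exact gaussIso_le_gaussIso_self γ x y)

theorem MeasureTheory.Integrable.smul_gradient_gaussIso (hp : Integrable p) (γ : ℝ)
    (x : EuclideanSpace ℝ (Fin d)) :
    Integrable (fun y => p y • gradient (fun z => gaussIso γ z y) x) := by
  refine hp.smul_bdd (|γ| * gaussIso γ x x) ?_ (.of_forall fun y => ?_)
  · simp_rw [gradient_gaussIso]
    exact Continuous.aestronglyMeasurable (by unfold gaussIso; fun_prop)
  · simpa only [gaussIso_self] using norm_gradient_gaussIso_le γ y x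

/-- Gaussian integration by parts: the smoothing of `∇p` is the gradient of the smoothing of `p`. -/
theorem integral_gaussIso_smul_gradient (hp : Differentiable ℝ p) (hp_int : Integrable p)
    (hgrad_int : Integrable (gradient p)) (x : EuclideanSpace ℝ (Fin d))
    (hibp : ∫ y, gradient (fun z => gaussIso γ x z * p z) y = 0) :
    ∫ y, gaussIso γ x y • gradient p y = ∫ y, p y • gradient (fun z => gaussIso γ z y) x := by
  have hdiff : Differentiable ℝ (gaussIso γ x) := fun y =>
    (hasGradientAt_gaussIso_right γ x y).differentiableAt
  have hp_smul_grad : Integrable (fun y => p y • gradient (gaussIso γ x) y) := by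
    simpa only [gradient_gaussIso_right, smul_neg] using (hp_int.smul_gradient_gaussIso γ x).fun_neg
  rw [integral_smul_gradient_eq_neg_of_integral_gradient_mul_eq_zero hdiff hp
    (hgrad_int.gaussIso_smul γ x) hp_smul_grad hibp]
  simp only [gradient_gaussIso_right, smul_neg, integral_neg, neg_neg]

end ScoreIdentity

/-- The iDEM estimator equals an importance-sampled Target Score Identity:
`∇_{x̃} log E_{π(x_0|x̃)}[p(x_0)]
  = E_{π(x_0|x̃)}[(q(x_0|x̃)/π(x_0|x̃)) ∇_{x_0} log p(x_0)]`,
where `π(x_0|x̃) = N(x_0; x̃, γ⁻² I)` and `q(x_0|x̃) ∝ N(x̃; x_0, γ⁻² I) p(x_0)`. -/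
theorem idem_importance_sampled_tsi {d : ℕ} (γ : ℝ) (hγ : 0 < γ)
    (p : EuclideanSpace ℝ (Fin d) → ℝ)
    (hp_smooth : Differentiable ℝ p) (hp_pos : ∀ x, 0 < p x)
    (hp_int : Integrable p)
    (hgrad_int : Integrable (fun x => gradient p x))
    (qt : EuclideanSpace ℝ (Fin d) → ℝ)
    (hqt : ∀ x, qt x = ∫ x0, gaussIso γ x x0 * p x0)
    (xt : EuclideanSpace ℝ (Fin d)) (hpos : 0 < qt xt)
    -- differentiation under the integral sign is justified:
    (hswap : HasGradientAt qt
      (∫ x0, p x0 • gradient (fun y => gaussIso γ y x0) xt) xt)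
    -- decay permitting integration by parts:
    (hibp : ∫ x0, gradient (fun y => gaussIso γ xt y * p y) x0 = 0) :
    gradient (fun y => Real.log (∫ x0, gaussIso γ y x0 * p x0)) xt
      = ∫ x0, gaussIso γ xt x0 •
          ((gaussIso γ xt x0 * p x0 / qt xt) / gaussIso γ xt x0) •
            gradient (fun z => Real.log (p z)) x0 := by
  have hlog_qt : gradient (fun y => Real.log (∫ x0, gaussIso γ y x0 * p x0)) xt
      = (qt xt)⁻¹ • ∫ x0, p x0 • gradient (fun y => gaussIso γ y x0) xt := by
    simp_rw [← hqt]
    exact (hswap.log hpos.ne').gradient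
  have hweight : ∀ x0, gaussIso γ xt x0 •
      ((gaussIso γ xt x0 * p x0 / qt xt) / gaussIso γ xt x0) •
        gradient (fun z => Real.log (p z)) x0
      = (qt xt)⁻¹ • gaussIso γ xt x0 • gradient p x0 := by
    intro x0
    rw [((hp_smooth x0).hasGradientAt.log (hp_pos x0).ne').gradient, smul_smul, smul_smul,
      smul_smul]
    congr 1
    field_simp [(gaussIso_pos hγ.ne' xt x0).ne', (hp_pos x0).ne']
  simp_rw [hlog_qt, hweight, integral_smul,
    integral_gaussIso_smul_gradient hp_smooth hp_int hgrad_int xt hibp]
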